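/- Weak continuity of the CF distance: let ω be a probability measure on ℝ^d with ∫‖t‖ dω(t) < ∞, ℙ a probability measure on a compact set X ⊆ ℝ^d, and (ℙ_n) a sequence of probability measures on X converging weakly to ℙ. Then C_ω²(ℙ_n, ℙ) = ∫ |Φ_{ℙ_n}(t) − Φ_ℙ(t)|² dω(t) → 0. -/

import Mathlib

open MeasureTheory Filter

open scoped RealInnerProductSpace Topology

/-! Weak convergence tests against the bounded continuous functions `x ↦ exp (i ⟪t, x⟫)`, so the
characteristic functions converge pointwise; since `|Φ_ℙₙ(t) - Φ_ℙ(t)|² ≤ 4` and `ω` is finite,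
dominated convergence gives `C_ω²(ℙₙ, ℙ) → 0`. -/

section CharFun

variable {E : Type*} [NormedAddCommGroup E] [InnerProductSpace ℝ E] [MeasurableSpace E]

lemma integral_exp_I_mul_inner_eq_charFun (ν : Measure E) (t : E) :
    ∫ x, Complex.exp (Complex.I * ((⟪t, x⟫ : ℝ) : ℂ)) ∂ν = charFun ν t := by
  simp_rw [charFun_apply, mul_comm Complex.I, real_inner_comm]

lemma norm_charFun_sub_charFun_le_two (μ ν : Measure E) [IsProbabilityMeasure μ]
    [IsProbabilityMeasure ν] (t : E) : ‖charFun μ t - charFun ν t‖ ≤ 2 :=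
  calc ‖charFun μ t - charFun ν t‖ ≤ ‖charFun μ t‖ + ‖charFun ν t‖ := norm_sub_le _ _
    _ ≤ 1 + 1 := add_le_add (norm_charFun_le_one t) (norm_charFun_le_one t)
    _ = 2 := one_add_one_eq_two

lemma tendsto_charFun_of_forall_tendsto_integral [OpensMeasurableSpace E] {ι : Type*}
    {l : Filter ι} {μs : ι → Measure E} [∀ i, IsProbabilityMeasure (μs i)] {μ : Measure E}
    [IsProbabilityMeasure μ]
    (hweak : ∀ f : BoundedContinuousFunction E ℝ,
      Tendsto (fun i ↦ ∫ x, f x ∂(μs i)) l (𝓝 (∫ x, f x ∂μ))) (t : E) :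
    Tendsto (fun i ↦ charFun (μs i) t) l (𝓝 (charFun μ t)) := by
  have hconv : Tendsto (β := ProbabilityMeasure E) (fun i ↦ ⟨μs i, inferInstance⟩) l
      (𝓝 ⟨μ, inferInstance⟩) :=
    ProbabilityMeasure.tendsto_iff_forall_integral_tendsto.mpr hweak
  simp_rw [charFun_eq_integral_innerProbChar]
  exact (ProbabilityMeasure.tendsto_iff_forall_integral_rclike_tendsto ℂ).mp hconv
    (BoundedContinuousFunction.innerProbChar t)

lemma tendsto_integral_norm_charFun_sub_sq [BorelSpace E] [SecondCountableTopology E]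
    (ω : Measure E) [IsFiniteMeasure ω] {ι : Type*} {l : Filter ι} [l.IsCountablyGenerated]
    {μs : ι → Measure E} [∀ i, IsProbabilityMeasure (μs i)] {μ : Measure E}
    [IsProbabilityMeasure μ] (h : ∀ t, Tendsto (fun i ↦ charFun (μs i) t) l (𝓝 (charFun μ t))) :
    Tendsto (fun i ↦ ∫ t, ‖charFun (μs i) t - charFun μ t‖ ^ 2 ∂ω) l (𝓝 0) := by
  have hdom : ∀ i, ∀ t, ‖‖charFun (μs i) t - charFun μ t‖ ^ 2‖ ≤ 2 ^ 2 := fun i t ↦ by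
    rw [norm_pow, norm_norm]
    exact pow_le_pow_left₀ (norm_nonneg _) (norm_charFun_sub_charFun_le_two _ _ t) 2
  have hlim : ∀ t, Tendsto (fun i ↦ ‖charFun (μs i) t - charFun μ t‖ ^ 2) l (𝓝 0) := fun t ↦ by
    simpa using (((h t).sub_const (charFun μ t)).norm).pow 2
  simpa using tendsto_integral_filter_of_dominated_convergence (fun _ ↦ (2 : ℝ) ^ 2)
    (Eventually.of_forall fun i ↦ by fun_prop) (Eventually.of_forall fun i ↦ ae_of_all ω (hdom i))
    (integrable_const _) (ae_of_all ω hlim)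

end CharFun

theorem cfd_weak_continuity_general (d : ℕ)
    (ω : Measure (EuclideanSpace ℝ (Fin d))) [IsProbabilityMeasure ω]
    (μ : Measure (EuclideanSpace ℝ (Fin d))) [IsProbabilityMeasure μ]
    (μs : ℕ → Measure (EuclideanSpace ℝ (Fin d))) [∀ n, IsProbabilityMeasure (μs n)]
    (hweak : ∀ f : BoundedContinuousFunction (EuclideanSpace ℝ (Fin d)) ℝ,
      Tendsto (fun n => ∫ x, f x ∂(μs n)) atTop (nhds (∫ x, f x ∂μ))) :
    Tendsto (fun n =>
        ∫ t, ‖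
          ((∫ x, Complex.exp (Complex.I * ((inner ℝ t x : ℝ) : ℂ)) ∂(μs n)) -
           (∫ x, Complex.exp (Complex.I * ((inner ℝ t x : ℝ) : ℂ)) ∂μ))‖ ^ 2 ∂ω)
      atTop (nhds 0) := by
  simp_rw [integral_exp_I_mul_inner_eq_charFun]
  exact tendsto_integral_norm_charFun_sub_sq ω
    (tendsto_charFun_of_forall_tendsto_integral hweak)

theorem cfd_weak_continuity (d : ℕ)
    (ω : Measure (EuclideanSpace ℝ (Fin d))) [IsProbabilityMeasure ω]
    (hωint : Integrable (fun t : EuclideanSpace ℝ (Fin d) => ‖t‖) ω)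
    (K : Set (EuclideanSpace ℝ (Fin d))) (hK : IsCompact K)
    (μ : Measure (EuclideanSpace ℝ (Fin d))) [IsProbabilityMeasure μ]
    (μs : ℕ → Measure (EuclideanSpace ℝ (Fin d))) [∀ n, IsProbabilityMeasure (μs n)]
    (hμK : μ Kᶜ = 0) (hμsK : ∀ n, μs n Kᶜ = 0)
    (hweak : ∀ f : BoundedContinuousFunction (EuclideanSpace ℝ (Fin d)) ℝ,
      Tendsto (fun n => ∫ x, f x ∂(μs n)) atTop (nhds (∫ x, f x ∂μ))) :
    Tendsto (fun n =>
        ∫ t, ‖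
          ((∫ x, Complex.exp (Complex.I * ((inner ℝ t x : ℝ) : ℂ)) ∂(μs n)) -
           (∫ x, Complex.exp (Complex.I * ((inner ℝ t x : ℝ) : ℂ)) ∂μ))‖ ^ 2 ∂ω)
      atTop (nhds 0) :=
  cfd_weak_continuity_general d ω μ μs hweak
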